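/- Let 0 → A → B → C → 0 and 0 → A' → B' → C' → 0 be short exact sequences of abelian groups with a morphism between them given by vertical maps α, β, γ. If α and γ are split injective and the second sequence is split (B' ≅ A' ⊕ C' compatibly), then β is split injective. -/
import Mathlib


/-- Morphism of short exact sequences of abelian groups: if the outer vertical maps
`α, γ` are split injective and the second sequence is split (the projection `p'` admits
a section), then the middle vertical map `β` is split injective. -/
theorem stmt_13 {A B C A' B' C' : Type*}
    [AddCommGroup A] [AddCommGroup B] [AddCommGroup C]
    [AddCommGroup A'] [AddCommGroup B'] [AddCommGroup C']
    (i : A →+ B) (p : B →+ C) (i' : A' →+ B') (p' : B' →+ C')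
    (hi : Function.Injective i) (hp : Function.Surjective p)
    (hex : i.range = p.ker)
    (hi' : Function.Injective i') (hp' : Function.Surjective p')
    (hex' : i'.range = p'.ker)
    (hsplit : ∃ s : C' →+ B', p'.comp s = AddMonoidHom.id C')
    (α : A →+ A') (β : B →+ B') (γ : C →+ C')
    (hsq1 : β.comp i = i'.comp α) (hsq2 : γ.comp p = p'.comp β)
    (hα : ∃ rα : A' →+ A, rα.comp α = AddMonoidHom.id A)
    (hγ : ∃ rγ : C' →+ C, rγ.comp γ = AddMonoidHom.id C) :
    ∃ rβ : B' →+ B, rβ.comp β = AddMonoidHom.id B := by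
  obtain ⟨s', hs'⟩ := hsplit
  obtain ⟨rα, hrα⟩ := hα
  obtain ⟨rγ, hrγ⟩ := hγ
  -- the "projection onto A'" part of the splitting
  have hmem : ∀ b' : B', b' - s' (p' b') ∈ i'.range := by
    intro b'
    rw [hex', AddMonoidHom.mem_ker, map_sub]
    have := DFunLike.congr_fun hs' (p' b')
    simp only [AddMonoidHom.comp_apply, AddMonoidHom.id_apply] at this
    rw [this, sub_self]
  let d : B' →+ B' := AddMonoidHom.id B' - s'.comp p'
  have hd : ∀ b', d b' = b' - s' (p' b') := fun _ => rfl
  let e := AddMonoidHom.ofInjective (f := i') hi'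
  let q' : B' →+ A' := (e.symm.toAddMonoidHom).comp
    ((d.codRestrict i'.range (fun b' => by rw [hd]; exact hmem b')))
  have hq' : ∀ b', i' (q' b') = b' - s' (p' b') := by
    intro b'
    exact AddMonoidHom.apply_ofInjective_symm (f := i') hi'
      ⟨b' - s' (p' b'), hmem b'⟩
  have hq'i' : ∀ a', q' (i' a') = a' := by
    intro a'
    apply hi'
    rw [hq']
    have : p' (i' a') = 0 := by
      have : i' a' ∈ p'.ker := by rw [← hex']; exact ⟨a', rfl⟩
      exact this
    rw [this, map_zero, sub_zero]
  -- the map k : B → B, k b = b - i (rα (q' (β b)))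
  let k : B →+ B := AddMonoidHom.id B - (i.comp (rα.comp (q'.comp β)))
  have hk : ∀ b, k b = b - i (rα (q' (β b))) := fun _ => rfl
  have hker : (p.ker : AddSubgroup B) ≤ k.ker := by
    intro b hb
    rw [← hex] at hb
    obtain ⟨a, rfl⟩ := hb
    have h1 : β (i a) = i' (α a) := DFunLike.congr_fun hsq1 a
    have h2 : q' (β (i a)) = α a := by rw [h1, hq'i']
    have h3 : rα (α a) = a := DFunLike.congr_fun hrα a
    simp [AddMonoidHom.mem_ker, hk, h2, h3]
  -- factor k through C via the quotient
  let φ := QuotientAddGroup.quotientKerEquivOfSurjective p hp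
  let h : C →+ B := (QuotientAddGroup.lift p.ker k hker).comp φ.symm.toAddMonoidHom
  have hhp : ∀ b, h (p b) = k b := by
    intro b
    have hφb : φ (QuotientAddGroup.mk b) = p b := rfl
    have : φ.symm (p b) = QuotientAddGroup.mk b := by
      rw [← hφb, AddEquiv.symm_apply_apply]
    simp only [h, AddMonoidHom.comp_apply, AddEquiv.coe_toAddMonoidHom, this]
    rfl
  refine ⟨(i.comp (rα.comp q')) + h.comp (rγ.comp p'), ?_⟩
  ext b
  have h2 : p' (β b) = γ (p b) := (DFunLike.congr_fun hsq2 b).symm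
  have h3 : rγ (γ (p b)) = p b := DFunLike.congr_fun hrγ (p b)
  simp only [AddMonoidHom.comp_apply, AddMonoidHom.add_apply, AddMonoidHom.id_apply,
    h2, h3, hhp, hk]
  abel
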